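/- Let f : ℝ → ℝ be continuously differentiable and 2π-periodic with square-integrable derivative, and θ uniform on [0,2π]. Then for a landscape defined purely on the circle, the two statements are equivalent: (a) Var_θ[f'(θ)] ≤ F implies Var_θ[f(θ + L) − f(θ)] ≤ L² F for all L, and (b) if additionally f satisfies the parameter shift rule f'(θ) = (f(θ+π/2) − f(θ−π/2))/2, then Var_θ[f(θ+π) − f(θ)] ≤ G implies Var_θ[f'(θ)] ≤ G/4. -/

import Mathlib

open MeasureTheory ProbabilityTheory Real

/-- The uniform probability measure on `[0, 2π]`. -/
noncomputable def unifCircle : Measure ℝ :=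
  (ENNReal.ofReal (2 * π))⁻¹ • volume.restrict (Set.Icc 0 (2 * π))

/-!
The argument rests on the invariance of the uniform measure under rotations of the circle.
For (a), write `f (θ + L) - f θ = ∫ s in 0..L, f' (θ + s)`; Cauchy–Schwarz in `s`, then Fubini
and rotation invariance bound its second moment by `L ^ 2` times that of `f'`. Both `f'` and the
finite difference have mean zero by periodicity, so these second moments are the variances.
For (b), the parameter shift rule at `θ + π / 2` reads `f (θ + π) - f θ = 2 * f' (θ + π / 2)`,
whose variance is `4 * Var[f']`, again by rotation invariance.
-/

namespace Function.Periodic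

variable {E : Type*} [NormedAddCommGroup E] {g : ℝ → E} {c : ℝ}

lemma exists_norm_le_of_continuous (hg : Periodic g c) (hc : c ≠ 0) (hcont : Continuous g) :
    ∃ C, ∀ x, ‖g x‖ ≤ C := by
  obtain ⟨C, hC⟩ := isBounded_iff_forall_norm_le.1 (hg.isBounded_of_continuous hc hcont)
  exact ⟨C, fun x => hC _ (Set.mem_range_self x)⟩

protected lemma deriv [NormedSpace ℝ E] {f : ℝ → E} (hf : Periodic f c) :
    Periodic (deriv f) c := fun x => by
  rw [← deriv_comp_add_const, funext hf]

end Function.Periodic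

instance : IsProbabilityMeasure unifCircle := by
  constructor
  rw [unifCircle, Measure.smul_apply, Measure.restrict_apply MeasurableSet.univ,
    Set.univ_inter, Real.volume_Icc, sub_zero, smul_eq_mul]
  exact ENNReal.inv_mul_cancel (ENNReal.ofReal_pos.2 two_pi_pos).ne' ENNReal.ofReal_ne_top

lemma integral_unifCircle (g : ℝ → ℝ) :
    ∫ x, g x ∂unifCircle = (2 * π)⁻¹ * ∫ x in 0..2 * π, g x := by
  rw [unifCircle, integral_smul_measure, intervalIntegral.integral_of_le two_pi_pos.le,
    ← integral_Icc_eq_integral_Ioc]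
  simp [ENNReal.toReal_inv, pi_pos.le]

lemma Continuous.integrable_unifCircle {g : ℝ → ℝ} (hg : Continuous g) :
    Integrable g unifCircle :=
  hg.integrableOn_Icc.smul_measure (ENNReal.inv_ne_top.2 (ENNReal.ofReal_pos.2 two_pi_pos).ne')

lemma integral_unifCircle_comp_add_right {g : ℝ → ℝ} (hg : Function.Periodic g (2 * π))
    (s : ℝ) : ∫ x, g (x + s) ∂unifCircle = ∫ x, g x ∂unifCircle := by
  rw [integral_unifCircle, integral_unifCircle, intervalIntegral.integral_comp_add_right,
    zero_add, add_comm, hg.intervalIntegral_add_eq s 0, zero_add]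

lemma variance_unifCircle_comp_add_right {g : ℝ → ℝ} (hg : Function.Periodic g (2 * π))
    (hmeas : Measurable g) (s : ℝ) :
    Var[fun x => g (x + s); unifCircle] = Var[g; unifCircle] := by
  have hshift : Measurable fun x => g (x + s) := hmeas.comp (measurable_add_const s)
  rw [variance_eq_integral hshift.aemeasurable,
    variance_eq_integral hmeas.aemeasurable, integral_unifCircle_comp_add_right hg]
  exact integral_unifCircle_comp_add_right (g := fun x => (g x - ∫ y, g y ∂unifCircle) ^ 2)
    (fun x => by simp only [hg x]) s

lemma integral_unifCircle_deriv {f : ℝ → ℝ} (hper : Function.Periodic f (2 * π))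
    (hf : Differentiable ℝ f) (hf' : IntervalIntegrable (deriv f) volume 0 (2 * π)) :
    ∫ x, deriv f x ∂unifCircle = 0 := by
  rw [integral_unifCircle, intervalIntegral.integral_deriv_eq_sub (fun x _ => hf x) hf',
    hper.eq, sub_self, mul_zero]

lemma integral_unifCircle_sub_comp_add_right {g : ℝ → ℝ} (hg : Function.Periodic g (2 * π))
    (hcont : Continuous g) (s : ℝ) : ∫ x, (g (x + s) - g x) ∂unifCircle = 0 := by
  rw [integral_sub (by fun_prop : Continuous fun x => g (x + s)).integrable_unifCircle
    hcont.integrable_unifCircle, integral_unifCircle_comp_add_right hg, sub_self]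

instance isFiniteMeasure_restrict_uIoc (a b : ℝ) :
    IsFiniteMeasure (volume.restrict (Set.uIoc a b)) :=
  Real.isFiniteMeasure_restrict_Ioc _ _

lemma integral_unifCircle_intervalIntegral_comp_add {w : ℝ → ℝ}
    (hw : Function.Periodic w (2 * π)) (hcont : Continuous w) (a b : ℝ) :
    ∫ x, (∫ s in a..b, w (x + s)) ∂unifCircle = (b - a) * ∫ x, w x ∂unifCircle := by
  obtain ⟨C, hC⟩ := hw.exists_norm_le_of_continuous two_pi_pos.ne' hcont
  rw [← intervalIntegral_integral_swap (f := fun s x => w (x + s))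
    (Integrable.of_bound (by fun_prop) C (ae_of_all _ fun _ => hC _))]
  simp only [integral_unifCircle_comp_add_right hw, intervalIntegral.integral_const, smul_eq_mul]

lemma sq_intervalIntegral_le {u : ℝ → ℝ} (hu : Continuous u) (a b : ℝ) :
    (∫ s in a..b, u s) ^ 2 ≤ (b - a) * ∫ s in a..b, u s ^ 2 := by
  rcases eq_or_ne a b with rfl | hab
  · simp
  have : NeZero (volume.restrict (Set.uIoc a b)) :=
    ⟨by simpa [Real.volume_uIoc, sub_eq_zero] using hab.symm⟩
  have jensen := (even_two.convexOn_pow (𝕜 := ℝ)).map_average_le (continuousOn_pow 2)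
    isClosed_univ (ae_of_all _ fun _ => Set.mem_univ _)
    (hu.integrableOn_uIoc (μ := volume) (a := a) (b := b))
    ((hu.pow 2).integrableOn_uIoc (μ := volume))
  simp only [interval_average_eq, smul_eq_mul] at jensen
  have hba : b - a ≠ 0 := sub_ne_zero.2 hab.symm
  calc (∫ s in a..b, u s) ^ 2 = (b - a) ^ 2 * ((b - a)⁻¹ * ∫ s in a..b, u s) ^ 2 := by
        field_simp
    _ ≤ (b - a) ^ 2 * ((b - a)⁻¹ * ∫ s in a..b, u s ^ 2) := by gcongr
    _ = (b - a) * ∫ s in a..b, u s ^ 2 := by field_simp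

lemma integral_unifCircle_sq_sub_le {f : ℝ → ℝ} (hper : Function.Periodic f (2 * π))
    (hf : ContDiff ℝ 1 f) (L : ℝ) :
    ∫ x, (f (x + L) - f x) ^ 2 ∂unifCircle ≤ L ^ 2 * ∫ x, deriv f x ^ 2 ∂unifCircle := by
  have hfc : Continuous f := hf.continuous
  have hf' : Continuous (deriv f) := hf.continuous_deriv le_rfl
  have hdiff (x : ℝ) : f (x + L) - f x = ∫ s in 0..L, deriv f (x + s) := by
    rw [intervalIntegral.integral_comp_add_left, add_zero, intervalIntegral.integral_deriv_eq_sub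
      (fun y _ => (hf.differentiable one_ne_zero).differentiableAt) (hf'.intervalIntegrable _ _)]
  calc ∫ x, (f (x + L) - f x) ^ 2 ∂unifCircle
      ≤ ∫ x, L * (∫ s in 0..L, deriv f (x + s) ^ 2) ∂unifCircle := by
        have hsliding : Continuous fun x => L * ∫ s in 0..L, deriv f (x + s) ^ 2 := by fun_prop
        refine integral_mono
          (by fun_prop : Continuous fun x => (f (x + L) - f x) ^ 2).integrable_unifCircle
          hsliding.integrable_unifCircle fun x => ?_
        simpa [hdiff] using sq_intervalIntegral_le (hf'.comp (continuous_const_add x)) 0 L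
    _ = L ^ 2 * ∫ x, deriv f x ^ 2 ∂unifCircle := by
        rw [integral_const_mul, integral_unifCircle_intervalIntegral_comp_add
          (w := fun x => deriv f x ^ 2) (fun x => by simp only [hper.deriv x]) (by fun_prop),
          sub_zero, ← mul_assoc, sq]

theorem circle_bp_iff_concentration_general
    (f : ℝ → ℝ) (hf : ContDiff ℝ 1 f) (hper : Function.Periodic f (2 * π)) :
    (∀ F : ℝ, 0 ≤ F → variance (deriv f) unifCircle ≤ F →
      ∀ L : ℝ, variance (fun θ => f (θ + L) - f θ) unifCircle ≤ L ^ 2 * F) ∧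
    ((∀ θ : ℝ, deriv f θ = (f (θ + π / 2) - f (θ - π / 2)) / 2) →
      ∀ G : ℝ, variance (fun θ => f (θ + π) - f θ) unifCircle ≤ G →
        variance (deriv f) unifCircle ≤ G / 4) := by
  have hfc : Continuous f := hf.continuous
  have hf' : Continuous (deriv f) := hf.continuous_deriv le_rfl
  have hvar_deriv : Var[deriv f; unifCircle] = ∫ x, deriv f x ^ 2 ∂unifCircle :=
    variance_of_integral_eq_zero hf'.aemeasurable (integral_unifCircle_deriv hper
      (hf.differentiable one_ne_zero) (hf'.intervalIntegrable _ _))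
  refine ⟨fun F _ hF L => ?_, fun hshift G hG => ?_⟩
  · rw [variance_of_integral_eq_zero (by fun_prop : Continuous _).aemeasurable
      (integral_unifCircle_sub_comp_add_right hper hfc L)]
    calc _ ≤ L ^ 2 * ∫ x, deriv f x ^ 2 ∂unifCircle := integral_unifCircle_sq_sub_le hper hf L
      _ ≤ L ^ 2 * F := mul_le_mul_of_nonneg_left (hvar_deriv ▸ hF) (sq_nonneg L)
  · have hdiff : (fun θ => f (θ + π) - f θ) = fun θ => 2 * deriv f (θ + π / 2) :=
      funext fun θ => by rw [hshift]; ring_nf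
    rw [hdiff, variance_const_mul, variance_unifCircle_comp_add_right hper.deriv hf'.measurable]
      at hG
    linarith

/-- One-dimensional equivalence of barren plateaus and cost concentration on the circle:
(a) a bound `F` on the variance of the derivative yields the bound `L² F` on the variance of
every finite difference of step `L`; (b) conversely, if the parameter shift rule holds, a
bound `G` on the variance of the difference of step `π` yields the bound `G/4` on the
variance of the derivative. -/
theorem circle_bp_iff_concentration
    (f : ℝ → ℝ) (hf : ContDiff ℝ 1 f) (hper : Function.Periodic f (2 * π))
    (hL2 : MemLp (deriv f) 2 unifCircle) :
    (∀ F : ℝ, 0 ≤ F → variance (deriv f) unifCircle ≤ F →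
      ∀ L : ℝ, variance (fun θ => f (θ + L) - f θ) unifCircle ≤ L ^ 2 * F) ∧
    ((∀ θ : ℝ, deriv f θ = (f (θ + π / 2) - f (θ - π / 2)) / 2) →
      ∀ G : ℝ, variance (fun θ => f (θ + π) - f θ) unifCircle ≤ G →
        variance (deriv f) unifCircle ≤ G / 4) :=
  circle_bp_iff_concentration_general f hf hper
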